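/- arXiv:1507.00655 — 5 statements merged into one kernel-verified Lean document; each statement's English description precedes it below -/
import Mathlib

section
/- (Soundness of the Chase Rule, tgd case.) Let r be a relation over a finite attribute set R' ⊇ R, let (T, T') be a tgd over R, let Ā be a sequence listing R, and let f be a valuation on Val(T) ∪ Val(T') that is injective on N := Val(T') ∖ Val(T), with f(v) ∈ R' for all v ∈ Val(T) ∪ (Val(T') ∩ Val(T)) and f(N) ∩ R' = ∅. If r satisfies (T, T') and satisfies the inclusion dependency f∘t(Ā) ⊆ Ā for every t ∈ T, then there is an extension r'' of r to R' ∪ f(N) (a relation over R' ∪ f(N) obtained by extending each tuple of r to the attributes f(N), so that r''|_{R'} = r) such that r'' satisfies the inclusion dependency f∘t'(Ā) ⊆ Ā for every t' ∈ T'. -/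
namespace EmbeddedDependencies

noncomputable section
open Classical

/- Values and attributes coincide; we take them to be natural numbers
   (a countably infinite set, with its total well-founded order `<`). -/
abbrev Val := ℕ

/-- A tuple over an attribute set `R` is (canonically encoded as) a total function
    `Val → Val`; only its values on `R` matter. -/
abbrev Tuple := Val → Val

/-- A relation is a set of tuples. -/
abbrev Rel := Set Tuple

/-- Canonical restriction of a tuple to the attribute set `R` (default value `0` outside `R`). -/
def restrictT (R : Set Val) (t : Tuple) : Tuple := fun a => if a ∈ R then t a else 0

/-- Restriction `r|_R` of a relation `r` to the attribute set `R`. -/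
def restrictR (R : Set Val) (r : Rel) : Rel := (restrictT R) '' r

/-- `Val(T)`: the set of values occurring in the relation `T` over the attribute set `R`. -/
def valsOf (R : Set Val) (T : Rel) : Set Val := {v | ∃ t ∈ T, ∃ a ∈ R, t a = v}

/-- `f(T) ⊆ r|_R` for a valuation `f : Val → Val`. -/
def Embeds (R : Set Val) (f : Val → Val) (T r : Rel) : Prop :=
  ∀ t ∈ T, restrictT R (f ∘ t) ∈ restrictR R r

/-- Satisfaction of the egd `(T, x = y)` over `R` by the relation `r`:
    every valuation `f` with `f(T) ⊆ r|_R` satisfies `f x = f y`. -/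
def egdSat (R : Set Val) (T : Rel) (x y : Val) (r : Rel) : Prop :=
  ∀ f : Val → Val, Embeds R f T r → f x = f y

/-- Satisfaction of the tgd `(T, T')` over `R` by the relation `r`: every valuation `f`
    (on `Val(T)`) with `f(T) ⊆ r|_R` has an extension `g` to `Val(T')`, agreeing with `f`
    on `Val(T) ∩ Val(T')`, with `g(T') ⊆ r|_R`. -/
def tgdSat (R : Set Val) (T T' : Rel) (r : Rel) : Prop :=
  ∀ f : Val → Val, Embeds R f T r →
    ∃ g : Val → Val, (∀ v ∈ valsOf R T ∩ valsOf R T', g v = f v) ∧ Embeds R g T' r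

/-- Satisfaction of the inclusion dependency `A_1 … A_n ⊆ B_1 … B_n` by the relation `r`. -/
def indSat (A B : List Val) (r : Rel) : Prop :=
  ∀ s ∈ r, ∃ s' ∈ r, A.map s = B.map s'

/-- `A` is a sequence listing the attribute set `R`. -/
def ListsR (A : List Val) (R : Set Val) : Prop := A.Nodup ∧ ∀ a, a ∈ A ↔ a ∈ R

/-- (Soundness of the Chase Rule, tgd case.) If `r ⊨ (T, T')` and
`r ⊨ f∘t(Ā) ⊆ Ā` for every `t ∈ T`, where `f` is injective on `N = Val(T') ∖ Val(T)`
and maps `N` to new attributes, then `r` extends to the attributes `f(N)` so that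
`f∘t'(Ā) ⊆ Ā` holds for every `t' ∈ T'`. -/
theorem chase_rule_tgd_sound
    (R R' : Set Val) (hR : R.Finite) (hR' : R'.Finite) (hRR' : R ⊆ R')
    (r : Rel) (hr : restrictR R' r = r)
    (T T' : Rel) (hTfin : T.Finite) (hT'fin : T'.Finite)
    (hTc : restrictR R T = T) (hT'c : restrictR R T' = T')
    (A : List Val) (hA : ListsR A R)
    (f : Val → Val)
    (hinj : Set.InjOn f (valsOf R T' \ valsOf R T))
    (hfR : ∀ v ∈ valsOf R T ∪ (valsOf R T' ∩ valsOf R T), f v ∈ R')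
    (hfN : (f '' (valsOf R T' \ valsOf R T)) ∩ R' = ∅)
    (hsat : tgdSat R T T' r)
    (hind : ∀ t ∈ T, indSat (A.map fun a => f (t a)) A r) :
    ∃ r'' : Rel,
      restrictR (R' ∪ f '' (valsOf R T' \ valsOf R T)) r'' = r'' ∧
      restrictR R' r'' = r ∧
      ∀ t' ∈ T', indSat (A.map fun a => f (t' a)) A r'' := by
  classical
  set N : Set Val := valsOf R T' \ valsOf R T with hN
  set fN : Set Val := f '' N with hfNdef
  -- every tuple of r is canonical over R'
  have scanon : ∀ s ∈ r, ∀ a, a ∉ R' → s a = 0 := by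
    intro s hs a ha
    rw [← hr] at hs
    obtain ⟨s₀, _, rfl⟩ := hs
    simp [restrictT, ha]
  -- new attributes are not in R'
  have hfNR' : ∀ a ∈ fN, a ∉ R' := by
    intro a ha ha'
    have : a ∈ fN ∩ R' := ⟨ha, ha'⟩
    rw [hfN] at this
    exact this.elim
  -- for each s ∈ r, the valuation s ∘ f embeds T into r|_R
  have hemb : ∀ s ∈ r, Embeds R (s ∘ f) T r := by
    intro s hs t ht
    obtain ⟨s', hs', heq⟩ := hind t ht s hs
    rw [List.map_map] at heq
    have hpt : ∀ a ∈ A, s (f (t a)) = s' a := List.map_inj_left.mp heq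
    refine ⟨s', hs', ?_⟩
    funext a
    by_cases haR : a ∈ R
    · have haA : a ∈ A := (hA.2 a).mpr haR
      simp [restrictT, haR, Function.comp, (hpt a haA).symm]
    · simp [restrictT, haR]
  -- apply tgd satisfaction to get the extending valuations
  have key : ∀ s, s ∈ r → ∃ g : Val → Val,
      (∀ v ∈ valsOf R T ∩ valsOf R T', g v = s (f v)) ∧ Embeds R g T' r := by
    intro s hs
    exact hsat (s ∘ f) (hemb s hs)
  choose g hg1 hg2 using key
  -- the extension of a tuple s ∈ r to the new attributes
  let ext : ∀ s, s ∈ r → Tuple := fun s hs a =>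
    if h : a ∈ fN then g s hs h.choose else s a
  -- properties of ext
  have ext_old : ∀ s (hs : s ∈ r), ∀ a, a ∉ fN → ext s hs a = s a := by
    intro s hs a ha; simp only [ext, dif_neg ha]
  have ext_new : ∀ s (hs : s ∈ r), ∀ v ∈ N, ext s hs (f v) = g s hs v := by
    intro s hs v hv
    have h : f v ∈ fN := ⟨v, hv, rfl⟩
    have hc := h.choose_spec
    have : h.choose = v := hinj hc.1 hv hc.2
    simp only [ext, dif_pos h, this]
  -- the extended relation
  refine ⟨{u | ∃ s, ∃ hs : s ∈ r, u = restrictT (R' ∪ fN) (ext s hs)}, ?_, ?_, ?_⟩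
  · -- canonicity over R' ∪ fN
    ext u
    constructor
    · rintro ⟨u₀, ⟨s, hs, rfl⟩, rfl⟩
      refine ⟨s, hs, ?_⟩
      funext a
      by_cases ha : a ∈ R' ∪ fN <;> simp [restrictT, ha]
    · rintro ⟨s, hs, rfl⟩
      refine ⟨restrictT (R' ∪ fN) (ext s hs), ⟨s, hs, rfl⟩, ?_⟩
      funext a
      by_cases ha : a ∈ R' ∪ fN <;> simp [restrictT, ha]
  · -- restriction back to R' is r
    have hback : ∀ s (hs : s ∈ r),
        restrictT R' (restrictT (R' ∪ fN) (ext s hs)) = s := by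
      intro s hs
      funext a
      by_cases ha : a ∈ R'
      · have ha' : a ∈ R' ∪ fN := Or.inl ha
        have hanfN : a ∉ fN := fun h => hfNR' a h ha
        simp [restrictT, ha, ha', ext_old s hs a hanfN]
      · simp [restrictT, ha, (scanon s hs a ha).symm]
    ext u
    constructor
    · rintro ⟨u₀, ⟨s, hs, rfl⟩, rfl⟩
      rw [hback s hs]; exact hs
    · intro hu
      exact ⟨restrictT (R' ∪ fN) (ext u hu), ⟨u, hu, rfl⟩, hback u hu⟩
  · -- the inds f∘t'(Ā) ⊆ Ā hold
    intro t' ht' u hu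
    obtain ⟨s, hs, rfl⟩ := hu
    -- g s hs embeds t' into r|_R
    obtain ⟨s₁, hs₁, heq1⟩ := hg2 s hs t' ht'
    have hpt1 : ∀ a ∈ R, s₁ a = g s hs (t' a) := by
      intro a ha
      have := congrFun heq1 a
      simpa [restrictT, ha, Function.comp] using this
    refine ⟨restrictT (R' ∪ fN) (ext s₁ hs₁), ⟨s₁, hs₁, rfl⟩, ?_⟩
    rw [List.map_map]
    apply List.map_inj_left.mpr
    intro a haA
    have haR : a ∈ R := (hA.2 a).mp haA
    have haR' : a ∈ R' := hRR' haR
    -- the RHS equals g s hs (t' a)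
    have hRHS : restrictT (R' ∪ fN) (ext s₁ hs₁) a = g s hs (t' a) := by
      have hanfN : a ∉ fN := fun h => hfNR' a h haR'
      simp [restrictT, Or.inl haR', ext_old s₁ hs₁ a hanfN, hpt1 a haR]
    rw [hRHS]
    -- now compute the LHS
    have hvT' : t' a ∈ valsOf R T' := ⟨t', ht', a, haR, rfl⟩
    by_cases hvT : t' a ∈ valsOf R T
    · -- old value
      have hfv : f (t' a) ∈ R' := hfR (t' a) (Or.inl hvT)
      have hfvnfN : f (t' a) ∉ fN := fun h => hfNR' _ h hfv
      have : restrictT (R' ∪ fN) (ext s hs) (f (t' a)) = s (f (t' a)) := by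
        simp [restrictT, Or.inl hfv, ext_old s hs _ hfvnfN]
      rw [Function.comp_apply, this, ← hg1 s hs (t' a) ⟨hvT, hvT'⟩]
    · -- new value
      have hvN : t' a ∈ N := ⟨hvT', hvT⟩
      have hfv : f (t' a) ∈ fN := ⟨t' a, hvN, rfl⟩
      have : restrictT (R' ∪ fN) (ext s hs) (f (t' a)) = g s hs (t' a) := by
        simp [restrictT, Or.inr hfv, ext_new s hs (t' a) hvN]
      rw [Function.comp_apply, this]

end
end EmbeddedDependencies
end

section
/- (Soundness of the Chase Rule, egd case.) Let r be a relation over a finite attribute set R' ⊇ R, let (T, x=y) be an egd over R, let Ā be a sequence listing R, and let f be a valuation with f(Val(T)) ⊆ R'. If r satisfies (T, x=y) and satisfies the inclusion dependency f∘t(Ā) ⊆ Ā for every t ∈ T, then every tuple s ∈ r satisfies s(f(x)) = s(f(y)). -/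
namespace EmbeddedDependencies

noncomputable section
open Classical

/-- (Soundness of the Chase Rule, egd case.) If `r ⊨ (T, x = y)` and
`r ⊨ f∘t(Ā) ⊆ Ā` for every `t ∈ T`, where `f` maps `Val(T)` into the attributes of `r`,
then every tuple `s ∈ r` satisfies `s (f x) = s (f y)`. -/
theorem chase_rule_egd_sound
    (R R' : Set Val) (hR : R.Finite) (hR' : R'.Finite) (hRR' : R ⊆ R')
    (r : Rel) (hr : restrictR R' r = r)
    (T : Rel) (hTfin : T.Finite) (hTc : restrictR R T = T)
    (x y : Val) (hx : x ∈ valsOf R T) (hy : y ∈ valsOf R T)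
    (A : List Val) (hA : ListsR A R)
    (f : Val → Val) (hf : ∀ v ∈ valsOf R T, f v ∈ R')
    (hsat : egdSat R T x y r)
    (hind : ∀ t ∈ T, indSat (A.map fun a => f (t a)) A r) :
    ∀ s ∈ r, s (f x) = s (f y) := by
  intro s hs
  exact hsat (fun v => s (f v)) (fun t ht => by
    obtain ⟨s', hs', heq⟩ := hind t ht s hs
    rw [List.map_map] at heq
    have hpt : ∀ a ∈ A, s (f (t a)) = s' a := by
      intro a ha
      have := List.map_eq_map_iff.mp heq a ha
      simpa using this
    refine ⟨s', hs', funext fun a => ?_⟩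
    unfold restrictT
    by_cases haR : a ∈ R
    · simp [haR, hpt a ((hA.2 a).mpr haR)]
    · simp [haR])

end
end EmbeddedDependencies
end

section
/- (Soundness of Chase Termination, tgd case.) Let T and T' be finite relations over R, S := Val(T) with R ∩ S = ∅, and let T* be the relation over R ∪ S with T*|_R = T whose values on the attributes of S are pairwise distinct and occur nowhere else; let id be the tuple over R ∪ S with id(x) = x for x ∈ S and pairwise distinct fresh values on the attributes of R. Let Ā list R, let u : Val(T') → Att be a mapping that is the identity on Val(T) ∩ Val(T'), and let r be a relation over a finite R' ⊇ R ∪ S with u(Val(T')) ⊆ R'. If r satisfies the tgd (T*, {id}) over R ∪ S and satisfies the inclusion dependency u∘t'(Ā) ⊆ Ā for every t' ∈ T', then r satisfies the tgd (T, T') over R. -/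
namespace EmbeddedDependencies

noncomputable section
open Classical

/-- The value `v` occurs at most once in the tableau `U` over `R`
    (`v` is a "distinct value"). -/
def DistinctIn (R : Set Val) (U : Rel) (v : Val) : Prop :=
  ∀ t ∈ U, ∀ t' ∈ U, ∀ a ∈ R, ∀ b ∈ R, t a = v → t' b = v → t = t' ∧ a = b

/-- (Soundness of Chase Termination, tgd case.) -/
theorem chase_termination_tgd_sound
    (R : Set Val) (hR : R.Finite)
    (T T' : Rel) (hTfin : T.Finite) (hT'fin : T'.Finite)
    (hTc : restrictR R T = T) (hT'c : restrictR R T' = T')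
    (S : Set Val) (hS : S = valsOf R T) (hRS : R ∩ S = ∅)
    -- `T*`: the relation over `R ∪ S` with `T*|_R = T` whose values on the attributes
    -- of `S` are pairwise distinct and occur nowhere else
    (Tstar : Rel) (hTstarC : restrictR (R ∪ S) Tstar = Tstar)
    (hTstarR : restrictR R Tstar = T)
    (hTstarInj : Set.InjOn (restrictT R) Tstar)
    -- `id`: the tuple over `R ∪ S` with `id x = x` on `S` and pairwise distinct fresh
    -- values on the attributes of `R`
    (idT : Tuple) (hidS : ∀ x ∈ S, idT x = x)
    (hdist1 : ∀ u ∈ Tstar, ∀ x ∈ S, DistinctIn (R ∪ S) (Tstar ∪ {idT}) (u x))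
    (hdist2 : ∀ a ∈ R, DistinctIn (R ∪ S) (Tstar ∪ {idT}) (idT a))
    (A : List Val) (hA : ListsR A R)
    (u : Val → Val) (hu : ∀ v ∈ valsOf R T ∩ valsOf R T', u v = v)
    (R' : Set Val) (hR' : R'.Finite) (hsub : R ∪ S ⊆ R')
    (huR : ∀ v ∈ valsOf R T', u v ∈ R')
    (r : Rel) (hr : restrictR R' r = r)
    (hstar : tgdSat (R ∪ S) Tstar {idT} r)
    (hind : ∀ t' ∈ T', indSat (A.map fun a => u (t' a)) A r) :
    tgdSat R T T' r := by
  intro f hf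
  -- choose, for each tuple of `Tstar`, a witness in `r` for the embedding of its
  -- restriction to `R`
  have hselEx : ∀ w : Tuple, ∃ s : Tuple, w ∈ Tstar →
      s ∈ r ∧ (∀ a ∈ R, s a = f (w a)) := by
    intro w
    by_cases hw : w ∈ Tstar
    · have htT : restrictT R w ∈ T := by
        rw [← hTstarR]; exact ⟨w, hw, rfl⟩
      obtain ⟨s, hs, hseq⟩ := hf _ htT
      refine ⟨s, fun _ => ⟨hs, fun a ha => ?_⟩⟩
      have := congrFun hseq a
      simpa [restrictT, ha, Function.comp] using this
    · exact ⟨0, fun h => absurd h hw⟩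
  choose sel hsel using hselEx
  -- values of `T` never occur as "fresh" values `w x`, `w ∈ Tstar`, `x ∈ S`
  have hnofresh : ∀ v ∈ valsOf R T, ∀ w ∈ Tstar, ∀ x ∈ S, w x ≠ v := by
    rintro v ⟨t, ht, a, ha, rfl⟩ w hw x hx heq
    rw [← hTstarR] at ht
    obtain ⟨w', hw', rfl⟩ := ht
    have hwa : w' a = w x := by simpa [restrictT, ha] using heq.symm
    have hd := hdist1 w hw x hx w (Or.inl hw) w' (Or.inl hw') x (Or.inr hx)
      a (Or.inl ha) rfl hwa
    have : a ∈ R ∩ S := ⟨ha, hd.2 ▸ hx⟩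
    rw [hRS] at this
    exact this
  -- define the valuation `h` for `Tstar`
  have hDEx : ∀ v : Val, ∃ c : Val,
      (v ∈ valsOf R T → c = f v) ∧
      (∀ w ∈ Tstar, ∀ x ∈ S, w x = v → c = sel w x) := by
    intro v
    by_cases hv : v ∈ valsOf R T
    · exact ⟨f v, fun _ => rfl,
        fun w hw x hx heq => absurd heq (hnofresh v hv w hw x hx)⟩
    · by_cases hd : ∃ w ∈ Tstar, ∃ x ∈ S, w x = v
      · obtain ⟨w0, hw0, x0, hx0, he0⟩ := hd
        refine ⟨sel w0 x0, fun h => absurd h hv, ?_⟩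
        intro w hw x hx heq
        have hd' := hdist1 w hw x hx w0 (Or.inl hw0) w (Or.inl hw)
          x0 (Or.inr hx0) x (Or.inr hx) (he0.trans heq.symm) rfl
        rw [hd'.1, hd'.2]
      · exact ⟨f v, fun h => absurd h hv,
          fun w hw x hx heq => absurd ⟨w, hw, x, hx, heq⟩ hd⟩
  choose h hh1 hh2 using hDEx
  -- `h` embeds `Tstar` into `r|_{R ∪ S}`
  have hEmb : Embeds (R ∪ S) h Tstar r := by
    intro w hw
    refine ⟨sel w, (hsel w hw).1, ?_⟩
    funext a
    simp only [restrictT, Function.comp]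
    by_cases haRS : a ∈ R ∪ S
    · rw [if_pos haRS, if_pos haRS]
      rcases haRS with ha | ha
      · have hval : w a ∈ valsOf R T := by
          refine ⟨restrictT R w, ?_, a, ha, by simp [restrictT, ha]⟩
          rw [← hTstarR]; exact ⟨w, hw, rfl⟩
        rw [hh1 (w a) hval]
        exact (hsel w hw).2 a ha
      · exact (hh2 (w a) w hw a ha rfl).symm
    · rw [if_neg haRS, if_neg haRS]
  -- apply the tgd `(Tstar, {idT})`
  obtain ⟨g', hg'agree, hg'emb⟩ := hstar h hEmb
  obtain ⟨s0, hs0r, hs0eq⟩ := hg'emb idT rfl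
  -- the witness tuple `s0` agrees with `f` on `S = Val(T)`
  have hs0S : ∀ x ∈ S, s0 x = f x := by
    intro x hx
    have hxRS : x ∈ R ∪ S := Or.inr hx
    have h1 : s0 x = g' (idT x) := by
      have := congrFun hs0eq x
      simpa [restrictT, hxRS, Function.comp] using this
    rw [h1, hidS x hx]
    have hxT : x ∈ valsOf R T := hS ▸ hx
    have hxTs : x ∈ valsOf (R ∪ S) Tstar := by
      obtain ⟨t, ht, a, ha, hta⟩ := hxT
      rw [← hTstarR] at ht
      obtain ⟨w, hw, rfl⟩ := ht
      exact ⟨w, hw, a, Or.inl ha, by simpa [restrictT, ha] using hta⟩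
    have hxId : x ∈ valsOf (R ∪ S) ({idT} : Rel) :=
      ⟨idT, rfl, x, hxRS, hidS x hx⟩
    rw [hg'agree x ⟨hxTs, hxId⟩, hh1 x hxT]
  -- the extension `g`
  refine ⟨fun v => s0 (u v), ?_, ?_⟩
  · intro v hv
    simp only
    rw [hu v hv, hs0S v (by rw [hS]; exact hv.1)]
  · intro t' ht'
    obtain ⟨s', hs'r, hs'eq⟩ := hind t' ht' s0 hs0r
    refine ⟨s', hs'r, ?_⟩
    funext a
    simp only [restrictT, Function.comp]
    by_cases ha : a ∈ R
    · rw [if_pos ha, if_pos ha]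
      have haA : a ∈ A := (hA.2 a).mpr ha
      rw [List.map_map] at hs'eq
      have hpt := (List.map_eq_map_iff.mp hs'eq) a haA
      simpa [Function.comp] using hpt.symm
    · rw [if_neg ha, if_neg ha]


end
end EmbeddedDependencies
end

section
/- (Soundness of Chase Termination, egd case.) Let T be a finite relation over R, S := Val(T) with R ∩ S = ∅, and let T* be the relation over R ∪ S with T*|_R = T whose values on the attributes of S are pairwise distinct and occur nowhere else; let id be the tuple over R ∪ S with id(x) = x for x ∈ S and pairwise distinct fresh values on the attributes of R. Let x, y ∈ Val(T) and let r be a relation over a finite R' ⊇ R ∪ S. If r satisfies the tgd (T*, {id}) over R ∪ S and every tuple s ∈ r satisfies s(x) = s(y), then r satisfies the egd (T, x=y) over R. -/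
namespace EmbeddedDependencies

noncomputable section
open Classical

/-- (Soundness of Chase Termination, egd case.) -/
theorem chase_termination_egd_sound
    (R : Set Val) (hR : R.Finite)
    (T : Rel) (hTfin : T.Finite) (hTc : restrictR R T = T)
    (S : Set Val) (hS : S = valsOf R T) (hRS : R ∩ S = ∅)
    -- `T*`: the relation over `R ∪ S` with `T*|_R = T` whose values on the attributes
    -- of `S` are pairwise distinct and occur nowhere else
    (Tstar : Rel) (hTstarC : restrictR (R ∪ S) Tstar = Tstar)
    (hTstarR : restrictR R Tstar = T)
    (hTstarInj : Set.InjOn (restrictT R) Tstar)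
    -- `id`: the tuple over `R ∪ S` with `id x = x` on `S` and pairwise distinct fresh
    -- values on the attributes of `R`
    (idT : Tuple) (hidS : ∀ x ∈ S, idT x = x)
    (hdist1 : ∀ u ∈ Tstar, ∀ x ∈ S, DistinctIn (R ∪ S) (Tstar ∪ {idT}) (u x))
    (hdist2 : ∀ a ∈ R, DistinctIn (R ∪ S) (Tstar ∪ {idT}) (idT a))
    (x y : Val) (hx : x ∈ valsOf R T) (hy : y ∈ valsOf R T)
    (R' : Set Val) (hR' : R'.Finite) (hsub : R ∪ S ⊆ R')
    (r : Rel) (hr : restrictR R' r = r)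
    (hstar : tgdSat (R ∪ S) Tstar {idT} r)
    (heq : ∀ s ∈ r, s x = s y) :
    egdSat R T x y r := by
  intro f hf
  classical
  -- every tuple of `Tstar` restricts (over R) to a tuple of `T`
  have hT_mem : ∀ u ∈ Tstar, restrictT R u ∈ T := by
    intro u hu; rw [← hTstarR]; exact ⟨u, hu, rfl⟩
  -- choose, for each tuple `u` of `Tstar`, a tuple `sfun u ∈ r` witnessing `f(T) ⊆ r|_R`
  have key : ∀ u : Tuple, ∃ s : Tuple, u ∈ Tstar →
      s ∈ r ∧ restrictT R s = restrictT R (f ∘ restrictT R u) := by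
    intro u
    by_cases hu : u ∈ Tstar
    · obtain ⟨s, hs, hse⟩ := hf (restrictT R u) (hT_mem u hu)
      exact ⟨s, fun _ => ⟨hs, hse⟩⟩
    · exact ⟨f, fun h => absurd h hu⟩
  choose sfun hsfun using key
  -- define the valuation `h`
  have hdef : ∀ v : Val, ∃ w : Val,
      ((∃ u ∈ Tstar, ∃ a ∈ S, u a = v) →
        ∀ u ∈ Tstar, ∀ a ∈ S, u a = v → w = sfun u a) ∧
      ((∀ u ∈ Tstar, ∀ a ∈ S, u a ≠ v) → w = f v) := by
    intro v
    by_cases hv : ∃ u ∈ Tstar, ∃ a ∈ S, u a = v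
    · obtain ⟨u0, hu0, a0, ha0, he0⟩ := hv
      refine ⟨sfun u0 a0, fun _ u hu a ha he => ?_, fun hno => absurd he0 (hno u0 hu0 a0 ha0)⟩
      have := hdist1 u hu a ha u0 (Or.inl hu0) u (Or.inl hu) a0 (Or.inr ha0) a (Or.inr ha)
        (he0.trans he.symm) rfl
      rw [this.1, this.2]
    · exact ⟨f v, fun hex => absurd hex hv, fun _ => rfl⟩
  choose h hh1 hh2 using hdef
  -- (A): on the fresh values (S-attributes of Tstar), `h` matches `sfun`
  have hA : ∀ u ∈ Tstar, ∀ a ∈ S, h (u a) = sfun u a := by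
    intro u hu a ha
    exact hh1 (u a) ⟨u, hu, a, ha, rfl⟩ u hu a ha rfl
  -- (B): on values of `T` (values at R-attributes of Tstar), `h` matches `f`
  have hB : ∀ v : Val, ∀ u ∈ Tstar, ∀ a ∈ R, u a = v → h v = f v := by
    intro v u hu a ha he
    apply hh2
    intro u' hu' b hb he'
    have := hdist1 u' hu' b hb u (Or.inl hu) u' (Or.inl hu') a (Or.inl ha) b (Or.inr hb)
      (he.trans he'.symm) rfl
    have hmem : a ∈ R ∩ S := ⟨ha, this.2 ▸ hb⟩
    rw [hRS] at hmem
    exact hmem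
  -- sfun agrees with f ∘ u on R-attributes
  have hsf : ∀ u ∈ Tstar, ∀ a ∈ R, sfun u a = f (u a) := by
    intro u hu a ha
    have := congrFun ((hsfun u hu).2) a
    simp only [restrictT, Function.comp_apply, if_pos ha] at this
    exact this
  -- (C): `h` embeds `Tstar` into `r|_{R ∪ S}`
  have hC : Embeds (R ∪ S) h Tstar r := by
    intro u hu
    refine ⟨sfun u, (hsfun u hu).1, ?_⟩
    funext a
    simp only [restrictT, Function.comp_apply]
    by_cases hmem : a ∈ R ∪ S
    · rw [if_pos hmem, if_pos hmem]
      rcases hmem with ha | ha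
      · rw [hsf u hu a ha, hB (u a) u hu a ha rfl]
      · exact (hA u hu a ha).symm
    · rw [if_neg hmem, if_neg hmem]
  -- apply the tgd
  obtain ⟨g, hg_agree, hg_emb⟩ := hstar h hC
  obtain ⟨s, hs_mem, hs_eq⟩ := hg_emb idT rfl
  -- s agrees with g ∘ idT on R ∪ S
  have hs : ∀ a ∈ R ∪ S, s a = g (idT a) := by
    intro a ha
    have := congrFun hs_eq a
    simp only [restrictT, Function.comp_apply, if_pos ha] at this
    exact this
  -- x, y ∈ S
  have hxS : x ∈ S := hS ▸ hx
  have hyS : y ∈ S := hS ▸ hy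
  -- for any z ∈ valsOf R T : z is a value at an R-attribute of some u ∈ Tstar,
  -- and g z = f z
  have hmain : ∀ z : Val, z ∈ valsOf R T → g z = f z := by
    intro z hz
    obtain ⟨t, ht, a, ha, he⟩ := hz
    rw [← hTstarR] at ht
    obtain ⟨u, hu, rfl⟩ := ht
    have hua : u a = z := by simpa [restrictT, if_pos ha] using he
    have hz1 : z ∈ valsOf (R ∪ S) Tstar := ⟨u, hu, a, Or.inl ha, hua⟩
    have hzS : z ∈ S := by
      rw [hS]; exact ⟨restrictT R u, hTstarR ▸ ⟨u, hu, rfl⟩, a, ha, he⟩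
    have hz2 : z ∈ valsOf (R ∪ S) ({idT} : Rel) :=
      ⟨idT, rfl, z, Or.inr hzS, hidS z hzS⟩
    calc g z = h z := hg_agree z ⟨hz1, hz2⟩
      _ = f z := hB z u hu a ha hua
  -- conclude
  have hgx : g x = f x := hmain x hx
  have hgy : g y = f y := hmain y hy
  have hsx : s x = g x := by rw [hs x (Or.inr hxS), hidS x hxS]
  have hsy : s y = g y := by rw [hs y (Or.inr hyS), hidS y hyS]
  have := heq s hs_mem
  rw [hsx, hsy, hgx, hgy] at this
  exact this

end
end EmbeddedDependencies
end

section
/- (Well-definedness of the chase result.) Let σ_0, σ_1, … be a chasing sequence of σ over Σ, with associated valuations ρ_0 = id and ρ_{n+1} = g ∘ ρ_n when σ_{n+1} = g(σ_n) is obtained by the egd rule, ρ_{n+1} = ρ_n otherwise. Then for every value x the sequence (ρ_n(x))_{n∈ℕ} is eventually constant (so ρ(x) := lim_n ρ_n(x) is well defined), the second components pr_2(σ_n) are eventually constant, and the chase result chase∞(Σ, σ) is well defined with non-empty first component T¹ whenever pr_1(σ) is non-empty. -/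
namespace EmbeddedDependencies

noncomputable section
open Classical

/-- Dependencies: egd's and tgd's (with their attribute set) and ind's. -/
inductive Dep : Type
  | egd (R : Set Val) (T : Rel) (x y : Val)
  | tgd (R : Set Val) (T T' : Rel)
  | ind (A B : List Val)

/-- Satisfaction of a dependency by a relation. -/
def Dep.sat (r : Rel) : Dep → Prop
  | .egd R T x y => egdSat R T x y r
  | .tgd R T T' => tgdSat R T T' r
  | .ind A B => indSat A B r

/-- The attribute set `Att(σ)` of a dependency. -/
def Dep.att : Dep → Set Val
  | .egd R _ _ _ => R
  | .tgd R _ _ => R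
  | .ind A B => {v | v ∈ A ∨ v ∈ B}

def Dep.isEgd : Dep → Prop
  | .egd _ _ _ _ => True
  | _ => False

def Dep.isTgd : Dep → Prop
  | .tgd _ _ _ => True
  | _ => False

/-- `d` is an egd or a tgd. -/
def Dep.isET (d : Dep) : Prop := d.isEgd ∨ d.isTgd

/-- Well-formed egd/tgd over the attribute set `R`: finite tableaux, canonically encoded,
    and (for an egd) `x, y ∈ Val(T)`. -/
def Dep.wf (R : Set Val) : Dep → Prop
  | .egd R0 T x y => R0 = R ∧ T.Finite ∧ restrictR R T = T ∧
      x ∈ valsOf R T ∧ y ∈ valsOf R T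
  | .tgd R0 T T' => R0 = R ∧ T.Finite ∧ T'.Finite ∧
      restrictR R T = T ∧ restrictR R T' = T'
  | .ind _ _ => False

/-- `Σ ⊨ σ`: every relation over a superset of `R` satisfying every member of `Σ`
    satisfies `σ`. -/
def Entails (R : Set Val) (Sg : Set Dep) (s : Dep) : Prop :=
  ∀ S : Set Val, R ⊆ S → ∀ r : Rel, restrictR S r = r →
    (∀ d ∈ Sg, Dep.sat r d) → Dep.sat r s

/-- Apply a valuation `g` to every tuple of a relation over `R`. -/
def mapRel (R : Set Val) (g : Val → Val) (T : Rel) : Rel :=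
  (fun t => restrictT R (g ∘ t)) '' T

/-- First component (tableau) of a dependency. -/
def pr1 : Dep → Rel
  | .egd _ T _ _ => T
  | .tgd _ T _ => T
  | .ind _ _ => ∅

/-- Second component of a tgd. -/
def pr2T : Dep → Rel
  | .tgd _ _ T' => T'
  | _ => ∅

/-- Left value of the equality of an egd. -/
def eqFst : Dep → Val
  | .egd _ _ x _ => x
  | _ => 0

/-- Right value of the equality of an egd. -/
def eqSnd : Dep → Val
  | .egd _ _ _ y => y
  | _ => 0

/-- The values occurring in a dependency (over ambient attribute set `R`). -/
def depVals (R : Set Val) : Dep → Set Val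
  | .egd _ T x y => valsOf R T ∪ {x, y}
  | .tgd _ T T' => valsOf R T ∪ valsOf R T'
  | .ind A B => {v | v ∈ A ∨ v ∈ B}

/-- `g(σ)`: apply a valuation to a dependency. -/
def applyVal (R : Set Val) (g : Val → Val) : Dep → Dep
  | .egd R0 T x y => .egd R0 (mapRel R g T) (g x) (g y)
  | .tgd R0 T T' => .tgd R0 (mapRel R g T) (mapRel R g T')
  | .ind A B => .ind A B

/-- Replace the first component of a dependency. -/
def withPr1 (d : Dep) (T : Rel) : Dep :=
  match d with
  | .egd R0 _ x y => .egd R0 T x y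
  | .tgd R0 _ T' => .tgd R0 T T'
  | .ind A B => .ind A B

/-- The valuation that is the identity everywhere except that it maps the greater of
    `p, q` to the smaller. -/
def mergeVal (p q : Val) : Val → Val := fun v => if v = max p q then min p q else v

/-- `f` witnesses that the egd `(S, x = y)` is applicable to the tableau `T`. -/
def EgdAppF (R : Set Val) (S : Rel) (x y : Val) (T : Rel) (f : Val → Val) : Prop :=
  Embeds R f S T ∧ f x ≠ f y

/-- `f` witnesses that the tgd `(S, S')` is applicable to the tableau `T`:
    `f(S) ⊆ T` but no extension of `f` to `Val(S')` embeds `S'` into `T`. -/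
def TgdAppF (R : Set Val) (S S' T : Rel) (f : Val → Val) : Prop :=
  Embeds R f S T ∧ ¬ ∃ g : Val → Val, (∀ v ∈ valsOf R S, g v = f v) ∧ Embeds R g S' T

/-- The dependency `d` is applicable to the tableau `T`. -/
def Applicable (R : Set Val) (d : Dep) (T : Rel) : Prop :=
  match d with
  | .egd _ S x y => ∃ f, EgdAppF R S x y T f
  | .tgd _ S S' => ∃ f, TgdAppF R S S' T f
  | .ind _ _ => False

/-- One application of the egd rule of the chase, applying `d = (S, x = y)` via `f`,
    recording the merging valuation `g` and the pair `(f x, f y)`. -/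
def EgdStepSpec (R : Set Val) (d σn σn1 : Dep) (g : Val → Val) (p : Val × Val) : Prop :=
  ∃ (S : Rel) (x y : Val) (f : Val → Val),
    d = Dep.egd R S x y ∧ EgdAppF R S x y (pr1 σn) f ∧
    p = (f x, f y) ∧ g = mergeVal (f x) (f y) ∧ σn1 = applyVal R g σn

/-- One application of the tgd rule of the chase at position `n` of the history `hist`:
    all (essentially distinct) applicable valuations are simultaneously given distinct
    extensions whose new values are fresh and greater than every value occurring in
    `σ_0, …, σ_n`. -/
def TgdStepSpec (R : Set Val) (d : Dep) (hist : ℕ → Dep) (n : ℕ) : Prop :=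
  ∃ S S' : Rel, d = Dep.tgd R S S' ∧
    (∃ f, TgdAppF R S S' (pr1 (hist n)) f) ∧
    ∃ ext : (Val → Val) → (Val → Val),
      (∀ f, TgdAppF R S S' (pr1 (hist n)) f → ∀ v ∈ valsOf R S, ext f v = f v) ∧
      (∀ f f', TgdAppF R S S' (pr1 (hist n)) f → TgdAppF R S S' (pr1 (hist n)) f' →
        (∀ v ∈ valsOf R S, f v = f' v) → ∀ v ∈ valsOf R S', ext f v = ext f' v) ∧
      (∀ f, TgdAppF R S S' (pr1 (hist n)) f → ∀ v ∈ valsOf R S' \ valsOf R S,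
        ∀ i ≤ n, ∀ w ∈ depVals R (hist i), w < ext f v) ∧
      (∀ f f', TgdAppF R S S' (pr1 (hist n)) f → TgdAppF R S S' (pr1 (hist n)) f' →
        ∀ v ∈ valsOf R S' \ valsOf R S, ∀ w ∈ valsOf R S' \ valsOf R S,
          ext f v = ext f' w → v = w ∧ ∀ z ∈ valsOf R S, f z = f' z) ∧
      hist (n + 1) = withPr1 (hist n)
        (pr1 (hist n) ∪ {t | ∃ f, TgdAppF R S S' (pr1 (hist n)) f ∧
          ∃ s' ∈ S', t = restrictT R (ext f ∘ s')})

/-- A chasing sequence of `s0` over `Σ` (over the attribute set `R`): `seq` is the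
    sequence `σ_0, σ_1, …`; `used n` records which dependency (if any) is applied at step
    `n` (`none` is allowed only when no dependency is applicable, the sequence then being
    constant from that point on); `gv n` is the merging valuation of an egd step (and `id`
    otherwise); `ep n` is the pair `(f x, f y)` of an egd step. An applied egd is applied
    repeatedly until no longer applicable, and no dependency applicable infinitely often
    is starved. -/
structure ChaseSeq (R : Set Val) (Sg : Set Dep) (s0 : Dep) where
  seq : ℕ → Dep
  used : ℕ → Option Dep
  gv : ℕ → Val → Val
  ep : ℕ → Val × Val
  init : seq 0 = s0
  stepNone : ∀ n, used n = none →
    (∀ d ∈ Sg, ¬ Applicable R d (pr1 (seq n))) ∧ seq (n + 1) = seq n ∧ gv n = id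
  stepSome : ∀ n d, used n = some d → d ∈ Sg ∧
    (EgdStepSpec R d (seq n) (seq (n + 1)) (gv n) (ep n) ∨
      (TgdStepSpec R d seq n ∧ gv n = id))
  egdRepeat : ∀ n d, used n = some d → Dep.isEgd d →
    Applicable R d (pr1 (seq (n + 1))) → used (n + 1) = some d
  fair : ∀ d ∈ Sg, (∀ m, ∃ n, m ≤ n ∧ Applicable R d (pr1 (seq n))) →
    ∀ m, ∃ n, m ≤ n ∧ used n = some d

/-- The descending valuations `ρ_n` associated with a chasing sequence. -/
def ChaseSeq.rho {R : Set Val} {Sg : Set Dep} {s0 : Dep} (C : ChaseSeq R Sg s0) :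
    ℕ → Val → Val
  | 0 => id
  | n + 1 => C.gv n ∘ C.rho n

/-- Eventual value of a sequence of values (defaulting to `0` if it does not stabilize). -/
noncomputable def evVal (g : ℕ → Val) : Val :=
  if h : ∃ m, ∀ n, m ≤ n → g n = g m then g h.choose else 0

/-- `ρ(x) = lim_n ρ_n(x)`. -/
noncomputable def ChaseSeq.rhoLim {R : Set Val} {Sg : Set Dep} {s0 : Dep}
    (C : ChaseSeq R Sg s0) : Val → Val :=
  fun v => evVal fun n => C.rho n v

/-- `T¹ = {u : ∃m ∀n ≥ m, u ∈ pr_1(σ_n)}`. -/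
def chaseLim1 {R : Set Val} {Sg : Set Dep} {s0 : Dep} (C : ChaseSeq R Sg s0) : Rel :=
  {t | ∃ m, ∀ n, m ≤ n → t ∈ pr1 (C.seq n)}

/-- `T² = {u : ∃m ∀n ≥ m, u ∈ pr_2(σ_n)}`. -/
def chaseLim2 {R : Set Val} {Sg : Set Dep} {s0 : Dep} (C : ChaseSeq R Sg s0) : Rel :=
  {t | ∃ m, ∀ n, m ≤ n → t ∈ pr2T (C.seq n)}

/-- The chase result `chase∞(Σ, σ)`. -/
noncomputable def ChaseSeq.result {R : Set Val} {Sg : Set Dep} {s0 : Dep}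
    (C : ChaseSeq R Sg s0) : Dep :=
  match s0 with
  | .egd R0 _ _ _ => .egd R0 (chaseLim1 C)
      (evVal fun n => eqFst (C.seq n)) (evVal fun n => eqSnd (C.seq n))
  | .tgd R0 _ _ => .tgd R0 (chaseLim1 C) (chaseLim2 C)
  | .ind A B => .ind A B

/-- A trivial dependency: an egd `(T, x = x)`, or a tgd `(T, T')` such that some
    valuation on `Val(T')` that is the identity on `Val(T) ∩ Val(T')` embeds `T'` into `T`. -/
def TrivialDep (R : Set Val) : Dep → Prop
  | .egd _ _ x y => x = y
  | .tgd _ T T' => ∃ f : Val → Val, (∀ v ∈ valsOf R T ∩ valsOf R T', f v = v) ∧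
      ∀ t' ∈ T', restrictT R (f ∘ t') ∈ restrictR R T
  | .ind _ _ => False


private lemma desc_ev_const (a : ℕ → ℕ) (h : ∀ n, a (n + 1) ≤ a n) :
    ∃ m, ∀ n, m ≤ n → a n = a m := by
  have mono : ∀ m n, m ≤ n → a n ≤ a m := by
    intro m n hmn
    induction n, hmn using Nat.le_induction with
    | base => exact le_rfl
    | succ n hmn ih => exact (h n).trans ih
  obtain ⟨b, ⟨m, rfl⟩, hmin⟩ :=
    (Nat.lt_wfRel.wf).has_min (Set.range a) ⟨a 0, 0, rfl⟩
  exact ⟨m, fun n hn => le_antisymm (mono m n hn) (not_lt.1 (hmin (a n) ⟨n, rfl⟩))⟩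

private lemma stab_on_finite (ρ : ℕ → Val → Val)
    (h : ∀ v, ∃ m, ∀ n, m ≤ n → ρ n v = ρ m v) (V : Set Val) (hV : V.Finite) :
    ∃ M, ∀ v ∈ V, ∀ n, M ≤ n → ρ n v = ρ M v := by
  choose m hm using h
  refine ⟨hV.toFinset.sup m, fun v hv n hn => ?_⟩
  have h1 : m v ≤ hV.toFinset.sup m := Finset.le_sup (hV.mem_toFinset.2 hv)
  rw [hm v n (h1.trans hn), hm v _ h1]

private lemma valsOf_finite {R : Set Val} {T : Rel} (hR : R.Finite) (hT : T.Finite) :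
    (valsOf R T).Finite := by
  have hsub : valsOf R T ⊆ (fun p : Tuple × Val => p.1 p.2) '' (T ×ˢ R) := by
    rintro v ⟨t, ht, a, ha, rfl⟩
    exact ⟨(t, a), ⟨ht, ha⟩, rfl⟩
  exact ((hT.prod hR).image _).subset hsub

private lemma restrictT_idem (R : Set Val) (t : Tuple) :
    restrictT R (restrictT R t) = restrictT R t := by
  funext a; by_cases ha : a ∈ R <;> simp [restrictT, ha]

private lemma mapRel_comp (R : Set Val) (g f : Val → Val) (T : Rel) :
    mapRel R g (mapRel R f T) = mapRel R (g ∘ f) T := by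
  unfold mapRel
  rw [Set.image_image]
  apply Set.image_congr
  intro t _
  funext a
  by_cases ha : a ∈ R <;> simp [restrictT, Function.comp, ha]

private lemma mapRel_congr (R : Set Val) {f g : Val → Val} (T : Rel)
    (h : ∀ t ∈ T, ∀ a ∈ R, f (t a) = g (t a)) : mapRel R f T = mapRel R g T := by
  unfold mapRel
  apply Set.image_congr
  intro t ht
  funext a
  by_cases ha : a ∈ R
  · simp [restrictT, ha, Function.comp, h t ht a ha]
  · simp [restrictT, ha]

private lemma pr2T_applyVal (R : Set Val) (g : Val → Val) (d : Dep) :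
    pr2T (applyVal R g d) = mapRel R g (pr2T d) := by
  cases d <;> simp [applyVal, pr2T, mapRel]

private lemma pr1_applyVal (R : Set Val) (g : Val → Val) (d : Dep) :
    pr1 (applyVal R g d) = mapRel R g (pr1 d) := by
  cases d <;> simp [applyVal, pr1, mapRel]

private lemma pr2T_withPr1 (d : Dep) (T : Rel) : pr2T (withPr1 d T) = pr2T d := by
  cases d <;> rfl

private lemma eqFst_withPr1 (d : Dep) (T : Rel) : eqFst (withPr1 d T) = eqFst d := by
  cases d <;> rfl

private lemma eqSnd_withPr1 (d : Dep) (T : Rel) : eqSnd (withPr1 d T) = eqSnd d := by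
  cases d <;> rfl

private lemma pr1_withPr1_union (d : Dep) (X : Rel) :
    pr1 d ⊆ pr1 (withPr1 d (pr1 d ∪ X)) := by
  cases d with
  | egd R0 T x y => exact Set.subset_union_left
  | tgd R0 T T' => exact Set.subset_union_left
  | ind A B => exact subset_rfl

private lemma eqFst_applyVal_le {R : Set Val} {g : Val → Val} (hg : ∀ v, g v ≤ v)
    (d : Dep) : eqFst (applyVal R g d) ≤ eqFst d := by
  cases d with
  | egd R0 T x y => exact hg x
  | tgd R0 T T' => exact le_rfl
  | ind A B => exact le_rfl

private lemma eqSnd_applyVal_le {R : Set Val} {g : Val → Val} (hg : ∀ v, g v ≤ v)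
    (d : Dep) : eqSnd (applyVal R g d) ≤ eqSnd d := by
  cases d with
  | egd R0 T x y => exact hg y
  | tgd R0 T T' => exact le_rfl
  | ind A B => exact le_rfl

private lemma gv_le {R : Set Val} {Sg : Set Dep} {s : Dep} (C : ChaseSeq R Sg s)
    (n : ℕ) (v : Val) : C.gv n v ≤ v := by
  cases h : C.used n with
  | none => rw [(C.stepNone n h).2.2]; exact le_rfl
  | some d =>
    rcases (C.stepSome n d h).2 with he | ht
    · obtain ⟨S, x, y, f, -, -, -, hg, -⟩ := he
      rw [hg]
      unfold mergeVal
      split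
      · next hv => rw [hv]; exact min_le_max
      · exact le_rfl
    · rw [ht.2]; exact le_rfl

private lemma rho_succ {R : Set Val} {Sg : Set Dep} {s : Dep} (C : ChaseSeq R Sg s)
    (n : ℕ) : C.rho (n + 1) = C.gv n ∘ C.rho n := rfl

private lemma stepCases {R : Set Val} {Sg : Set Dep} {s : Dep} (C : ChaseSeq R Sg s)
    (n : ℕ) :
    (C.seq (n + 1) = C.seq n ∧ C.gv n = id) ∨
    C.seq (n + 1) = applyVal R (C.gv n) (C.seq n) ∨
    ((∃ X, C.seq (n + 1) = withPr1 (C.seq n) (pr1 (C.seq n) ∪ X)) ∧ C.gv n = id) := by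
  cases h : C.used n with
  | none => exact Or.inl ⟨(C.stepNone n h).2.1, (C.stepNone n h).2.2⟩
  | some d =>
    rcases (C.stepSome n d h).2 with he | ht
    · obtain ⟨S, x, y, f, -, -, -, -, hseq⟩ := he
      exact Or.inr (Or.inl hseq)
    · obtain ⟨⟨S, S', -, -, ext, -, -, -, -, hseq⟩, hid⟩ := ht
      exact Or.inr (Or.inr ⟨⟨_, hseq⟩, hid⟩)

/-- (Well-definedness of the chase result.) Along a chasing sequence,
every sequence `(ρ_n x)_n` is eventually constant, the second components `pr_2(σ_n)` are
eventually constant, and the first component of the chase result is non-empty whenever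
`pr_1(σ)` is non-empty. -/
theorem chase_result_well_defined
    (R : Set Val) (hR : R.Finite)
    (Sg : Set Dep) (hwf : ∀ d ∈ Sg, Dep.wf R d)
    (s : Dep) (hs : Dep.wf R s)
    (C : ChaseSeq R Sg s) :
    (∀ x : Val, ∃ m, ∀ n, m ≤ n → C.rho n x = C.rho m x) ∧
    (∃ m, ∀ n, m ≤ n → pr2T (C.seq n) = pr2T (C.seq m) ∧
      eqFst (C.seq n) = eqFst (C.seq m) ∧ eqSnd (C.seq n) = eqSnd (C.seq m)) ∧
    ((pr1 s).Nonempty → (chaseLim1 C).Nonempty) := by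
  have part1 : ∀ x : Val, ∃ m, ∀ n, m ≤ n → C.rho n x = C.rho m x := by
    intro x
    exact desc_ev_const (fun n => C.rho n x) (fun n => gv_le C n (C.rho n x))
  refine ⟨part1, ?_, ?_⟩
  · -- eventual constancy of pr2T, eqFst, eqSnd
    have hfin2 : (pr2T s).Finite := by
      cases s with
      | egd R0 T x y => exact Set.finite_empty
      | tgd R0 T T' => exact hs.2.2.1
      | ind A B => exact hs.elim
    have h02 : mapRel R id (pr2T s) = pr2T s := by
      cases s with
      | egd R0 T x y => simp [pr2T, mapRel]
      | tgd R0 T T' => exact hs.2.2.2.2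
      | ind A B => exact hs.elim
    have inv2 : ∀ n, pr2T (C.seq n) = mapRel R (C.rho n) (pr2T s) := by
      intro n
      induction n with
      | zero => rw [C.init]; exact h02.symm
      | succ n ih =>
        rcases stepCases C n with ⟨hseq, hid⟩ | hseq | ⟨⟨X, hseq⟩, hid⟩
        · rw [hseq, ih, rho_succ, hid, Function.id_comp]
        · rw [hseq, pr2T_applyVal, ih, mapRel_comp, rho_succ]
        · rw [hseq, pr2T_withPr1, ih, rho_succ, hid, Function.id_comp]
    obtain ⟨M, hM⟩ := stab_on_finite C.rho part1 (valsOf R (pr2T s)) (valsOf_finite hR hfin2)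
    have stab2 : ∀ n, M ≤ n → pr2T (C.seq n) = pr2T (C.seq M) := by
      intro n hn
      rw [inv2, inv2]
      exact mapRel_congr R _ fun t ht a ha => hM _ ⟨t, ht, a, ha, rfl⟩ n hn
    have dF : ∀ n, eqFst (C.seq (n + 1)) ≤ eqFst (C.seq n) := by
      intro n
      rcases stepCases C n with ⟨hseq, -⟩ | hseq | ⟨⟨X, hseq⟩, -⟩
      · rw [hseq]
      · rw [hseq]; exact eqFst_applyVal_le (gv_le C n) (C.seq n)
      · rw [hseq, eqFst_withPr1]
    have dS : ∀ n, eqSnd (C.seq (n + 1)) ≤ eqSnd (C.seq n) := by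
      intro n
      rcases stepCases C n with ⟨hseq, -⟩ | hseq | ⟨⟨X, hseq⟩, -⟩
      · rw [hseq]
      · rw [hseq]; exact eqSnd_applyVal_le (gv_le C n) (C.seq n)
      · rw [hseq, eqSnd_withPr1]
    obtain ⟨mF, hF⟩ := desc_ev_const (fun n => eqFst (C.seq n)) dF
    obtain ⟨mS, hS⟩ := desc_ev_const (fun n => eqSnd (C.seq n)) dS
    refine ⟨max M (max mF mS), fun n hn => ?_⟩
    have hMn : M ≤ n := (le_max_left _ _).trans hn
    have hFn : mF ≤ n := ((le_max_left _ _).trans (le_max_right _ _)).trans hn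
    have hSn : mS ≤ n := ((le_max_right _ _).trans (le_max_right _ _)).trans hn
    have hMm : M ≤ max M (max mF mS) := le_max_left _ _
    have hFm : mF ≤ max M (max mF mS) := (le_max_left _ _).trans (le_max_right _ _)
    have hSm : mS ≤ max M (max mF mS) := (le_max_right _ _).trans (le_max_right _ _)
    exact ⟨(stab2 n hMn).trans (stab2 _ hMm).symm,
      (hF n hFn).trans (hF _ hFm).symm, (hS n hSn).trans (hS _ hSm).symm⟩
  · -- non-emptiness of chaseLim1
    rintro ⟨t, ht⟩
    have h01 : restrictR R (pr1 s) = pr1 s := by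
      cases s with
      | egd R0 T x y => exact hs.2.2.1
      | tgd R0 T T' => exact hs.2.2.2.1
      | ind A B => exact hs.elim
    have tfix : restrictT R t = t := by
      rw [← h01] at ht
      obtain ⟨u, -, rfl⟩ := ht
      exact restrictT_idem R u
    have memInv : ∀ n, restrictT R (C.rho n ∘ t) ∈ pr1 (C.seq n) := by
      intro n
      induction n with
      | zero =>
        rw [C.init]
        show restrictT R t ∈ pr1 s
        rw [tfix]; exact ht
      | succ n ih =>
        rcases stepCases C n with ⟨hseq, hid⟩ | hseq | ⟨⟨X, hseq⟩, hid⟩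
        · have heq : C.rho (n + 1) ∘ t = C.rho n ∘ t := by
            rw [rho_succ, hid]; rfl
          rw [hseq, heq]; exact ih
        · rw [hseq, pr1_applyVal]
          refine ⟨restrictT R (C.rho n ∘ t), ih, ?_⟩
          funext a
          by_cases ha : a ∈ R <;>
            simp [restrictT, rho_succ, Function.comp, ha]
        · have heq : C.rho (n + 1) ∘ t = C.rho n ∘ t := by
            rw [rho_succ, hid]; rfl
          rw [hseq, heq]
          exact pr1_withPr1_union (C.seq n) X ih
    obtain ⟨M, hM⟩ := stab_on_finite C.rho part1 (t '' R) (hR.image t)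
    refine ⟨restrictT R (C.rho M ∘ t), M, fun n hn => ?_⟩
    have heq : restrictT R (C.rho M ∘ t) = restrictT R (C.rho n ∘ t) := by
      funext a
      by_cases ha : a ∈ R
      · simp only [restrictT, ha, if_true, Function.comp]
        exact (hM (t a) ⟨a, ha, rfl⟩ n hn).symm
      · simp [restrictT, ha]
    rw [heq]
    exact memInv n

end
end EmbeddedDependencies
end
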